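/- arXiv:2409.14686 — 2 statements merged into one kernel-verified Lean document; each statement's English description precedes it below -/
import Mathlib

section
/- Let λ > 0 and define E : (0,∞) → ℝ by assuming: (a) E(λ) ≤ 0 for all λ > 0, and (b) E(μλ) ≥ μ^{(p+1)/2} E(λ) for all 0 < μ < 1 and λ > 0, where p > 1. Then for all λ₁, λ₂ > 0, E(λ₁) + E(λ₂) ≥ E(λ₁ + λ₂); moreover, if E(λ₁ + λ₂) < 0 then the inequality is strict. -/
theorem energy_subadditive (p : ℝ) (hp : 1 < p) (E : ℝ → ℝ)
    (hE0 : ∀ lam : ℝ, 0 < lam → E lam ≤ 0)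
    (hscale : ∀ μ lam : ℝ, 0 < μ → μ < 1 → 0 < lam →
      E (μ * lam) ≥ μ ^ ((p + 1) / 2) * E lam) :
    ∀ lam₁ lam₂ : ℝ, 0 < lam₁ → 0 < lam₂ →
      (E lam₁ + E lam₂ ≥ E (lam₁ + lam₂)) ∧
      (E (lam₁ + lam₂) < 0 → E lam₁ + E lam₂ > E (lam₁ + lam₂)) := by
  intro l1 l2 h1 h2
  set L := l1 + l2 with hL
  have hLpos : 0 < L := by positivity
  have hs : (1 : ℝ) < (p + 1) / 2 := by linarith
  set μ1 := l1 / L with hμ1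
  set μ2 := l2 / L with hμ2
  have hμ1pos : 0 < μ1 := by positivity
  have hμ2pos : 0 < μ2 := by positivity
  have hsum : μ1 + μ2 = 1 := by rw [hμ1, hμ2, ← add_div, ← hL, div_self hLpos.ne']
  have hμ1lt : μ1 < 1 := by nlinarith
  have hμ2lt : μ2 < 1 := by nlinarith
  have hm1 : μ1 * L = l1 := div_mul_cancel₀ _ hLpos.ne'
  have hm2 : μ2 * L = l2 := div_mul_cancel₀ _ hLpos.ne'
  have h1' := hscale μ1 L hμ1pos hμ1lt hLpos
  have h2' := hscale μ2 L hμ2pos hμ2lt hLpos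
  rw [hm1] at h1'
  rw [hm2] at h2'
  have hr1 : μ1 ^ ((p + 1) / 2) < μ1 := by
    calc μ1 ^ ((p + 1) / 2) < μ1 ^ (1:ℝ) :=
          Real.rpow_lt_rpow_of_exponent_gt hμ1pos hμ1lt hs
      _ = μ1 := Real.rpow_one _
  have hr2 : μ2 ^ ((p + 1) / 2) < μ2 := by
    calc μ2 ^ ((p + 1) / 2) < μ2 ^ (1:ℝ) :=
          Real.rpow_lt_rpow_of_exponent_gt hμ2pos hμ2lt hs
      _ = μ2 := Real.rpow_one _
  have hc : μ1 ^ ((p + 1) / 2) + μ2 ^ ((p + 1) / 2) < 1 := by linarith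
  have hp1 : 0 < μ1 ^ ((p + 1) / 2) := Real.rpow_pos_of_pos hμ1pos _
  have hp2 : 0 < μ2 ^ ((p + 1) / 2) := Real.rpow_pos_of_pos hμ2pos _
  have hEL : E L ≤ 0 := hE0 L hLpos
  constructor
  · nlinarith [mul_nonneg (le_of_lt hp1) (neg_nonneg.mpr hEL),
      mul_nonneg (le_of_lt hp2) (neg_nonneg.mpr hEL)]
  · intro hneg
    nlinarith [mul_pos hp1 (neg_pos.mpr hneg), mul_pos hp2 (neg_pos.mpr hneg)]
end

section
/- For each q with 2 ≤ q < 4, the ratio [∫₀¹ ‖e^{irΔ}g_{σ₀}‖_{L^q(ℝ²)}^q dr] / [‖∇g_{σ₀}‖_{L²}² ‖g_{σ₀}‖_{L²}^{q−2}] equals (1/q)(2/π)^{(q−2)/2} σ₀^{(4−q)/2} ∫₀¹ (1 + (4r/σ₀)²)^{−(q−2)/2} dr, and this tends to +∞ as σ₀ → ∞. -/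
open Real Filter

theorem gaussian_ratio_blowup (q : ℝ) (hq1 : 2 ≤ q) (hq2 : q < 4) :
    (∀ σ₀ : ℝ, 0 < σ₀ →
      ((π / q) * σ₀ ^ (q - 1) * ∫ r in (0:ℝ)..1, (σ₀ ^ 2 + (4 * r) ^ 2) ^ ((2 - q) / 2)) /
          (π * ((π / 2) * σ₀) ^ ((q - 2) / 2))
        = (1 / q) * (2 / π) ^ ((q - 2) / 2) * σ₀ ^ ((4 - q) / 2) *
            ∫ r in (0:ℝ)..1, (1 + (4 * r / σ₀) ^ 2) ^ (-((q - 2) / 2))) ∧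
    Tendsto (fun σ₀ : ℝ =>
      ((π / q) * σ₀ ^ (q - 1) * ∫ r in (0:ℝ)..1, (σ₀ ^ 2 + (4 * r) ^ 2) ^ ((2 - q) / 2)) /
        (π * ((π / 2) * σ₀) ^ ((q - 2) / 2))) atTop atTop := by
  have hπ := Real.pi_pos
  have hq0 : (0:ℝ) < q := by linarith
  have heq : ∀ σ₀ : ℝ, 0 < σ₀ →
      ((π / q) * σ₀ ^ (q - 1) * ∫ r in (0:ℝ)..1, (σ₀ ^ 2 + (4 * r) ^ 2) ^ ((2 - q) / 2)) /
          (π * ((π / 2) * σ₀) ^ ((q - 2) / 2))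
        = (1 / q) * (2 / π) ^ ((q - 2) / 2) * σ₀ ^ ((4 - q) / 2) *
            ∫ r in (0:ℝ)..1, (1 + (4 * r / σ₀) ^ 2) ^ (-((q - 2) / 2)) := by
    intro σ₀ hσ
    have hInt : (∫ r in (0:ℝ)..1, (σ₀ ^ 2 + (4 * r) ^ 2) ^ ((2 - q) / 2))
        = σ₀ ^ (2 - q) * ∫ r in (0:ℝ)..1, (1 + (4 * r / σ₀) ^ 2) ^ (-((q - 2) / 2)) := by
      rw [← intervalIntegral.integral_const_mul]
      apply intervalIntegral.integral_congr
      intro r _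
      have hbase : σ₀ ^ 2 + (4 * r) ^ 2 = σ₀ ^ 2 * (1 + (4 * r / σ₀) ^ 2) := by
        field_simp
      show (σ₀ ^ 2 + (4 * r) ^ 2) ^ ((2 - q) / 2)
          = σ₀ ^ (2 - q) * (1 + (4 * r / σ₀) ^ 2) ^ (-((q - 2) / 2))
      rw [hbase, Real.mul_rpow (by positivity) (by positivity)]
      congr 1
      · rw [← Real.rpow_natCast σ₀ 2, ← Real.rpow_mul hσ.le]
        congr 1
        push_cast
        ring
      · congr 1; ring
    rw [hInt]
    have hA : ((π / 2) * σ₀) ^ ((q - 2) / 2)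
        = (π / 2) ^ ((q - 2) / 2) * σ₀ ^ ((q - 2) / 2) :=
      Real.mul_rpow (by positivity) hσ.le
    have h4 : (2 / π) ^ ((q - 2) / 2) = ((π / 2) ^ ((q - 2) / 2))⁻¹ := by
      rw [show (2:ℝ)/π = (π/2)⁻¹ by field_simp, Real.inv_rpow (by positivity)]
    have h2 : σ₀ ^ (q - 1) * σ₀ ^ (2 - q) = σ₀ := by
      rw [← Real.rpow_add hσ, show q - 1 + (2 - q) = 1 by ring, Real.rpow_one]
    have h1 : σ₀ ^ ((4 - q) / 2) * σ₀ ^ ((q - 2) / 2) = σ₀ := by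
      rw [← Real.rpow_add hσ, show (4 - q)/2 + (q - 2)/2 = 1 by ring, Real.rpow_one]
    have hApos : (0:ℝ) < (π / 2) ^ ((q - 2) / 2) := by positivity
    have hspos : (0:ℝ) < σ₀ ^ ((q - 2) / 2) := Real.rpow_pos_of_pos hσ _
    rw [hA, h4]
    set I := ∫ r in (0:ℝ)..1, (1 + (4 * r / σ₀) ^ 2) ^ (-((q - 2) / 2)) with hI
    set A := (π / 2) ^ ((q - 2) / 2) with hA2
    set B := σ₀ ^ ((q - 2) / 2) with hB
    set C := σ₀ ^ ((4 - q) / 2) with hC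
    set X := σ₀ ^ (q - 1) with hX
    set Y := σ₀ ^ (2 - q) with hY
    have hXY : X * Y = C * B := h2.trans h1.symm
    have hAinv : A⁻¹ * A = 1 := inv_mul_cancel₀ (ne_of_gt hApos)
    rw [div_eq_iff (by positivity)]
    linear_combination (π / q * I) * hXY - (π / q * C * B * I) * hAinv
  refine ⟨heq, ?_⟩
  have he0 : 0 ≤ (q - 2) / 2 := by linarith
  have hc : (0:ℝ) < 1 / q * (2 / π) ^ ((q - 2) / 2) * (17:ℝ) ^ (-((q - 2) / 2)) := by
    positivity
  apply tendsto_atTop_mono' atTop ?_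
    ((tendsto_rpow_atTop (by linarith : (0:ℝ) < (4 - q) / 2)).const_mul_atTop hc)
  filter_upwards [eventually_ge_atTop (1:ℝ)] with σ₀ hσ1
  have hσ : (0:ℝ) < σ₀ := lt_of_lt_of_le one_pos hσ1
  rw [heq σ₀ hσ]
  set I := ∫ r in (0:ℝ)..1, (1 + (4 * r / σ₀) ^ 2) ^ (-((q - 2) / 2)) with hI
  have h17 : (17:ℝ) ^ (-((q - 2) / 2)) ≤ I := by
    have hcont : Continuous fun r : ℝ => (1 + (4 * r / σ₀) ^ 2 : ℝ) ^ (-((q - 2) / 2)) := by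
      apply Continuous.rpow_const
      · fun_prop
      · intro x; left; positivity
    have := intervalIntegral.integral_mono_on (a := (0:ℝ)) (b := 1)
      (f := fun _ => (17:ℝ) ^ (-((q - 2) / 2)))
      (g := fun r => (1 + (4 * r / σ₀) ^ 2 : ℝ) ^ (-((q - 2) / 2)))
      (by norm_num) intervalIntegrable_const (hcont.intervalIntegrable (μ := MeasureTheory.volume) 0 1) ?_
    · simpa using this
    · intro r hr
      apply Real.rpow_le_rpow_of_nonpos (by positivity) ?_ (by linarith)
      have h1 : 0 ≤ r := hr.1
      have h2 : r ≤ 1 := hr.2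
      have : (4 * r / σ₀) ^ 2 ≤ 16 := by
        rw [div_pow]
        rw [div_le_iff₀ (by positivity)]
        nlinarith
      linarith
  have hk : (0:ℝ) ≤ 1 / q * (2 / π) ^ ((q - 2) / 2) * σ₀ ^ ((4 - q) / 2) := by positivity
  calc 1 / q * (2 / π) ^ ((q - 2) / 2) * (17:ℝ) ^ (-((q - 2) / 2)) * σ₀ ^ ((4 - q) / 2)
      = (1 / q * (2 / π) ^ ((q - 2) / 2) * σ₀ ^ ((4 - q) / 2)) * (17:ℝ) ^ (-((q - 2) / 2)) := by
        ring
    _ ≤ (1 / q * (2 / π) ^ ((q - 2) / 2) * σ₀ ^ ((4 - q) / 2)) * I :=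
        mul_le_mul_of_nonneg_left h17 hk
    _ = 1 / q * (2 / π) ^ ((q - 2) / 2) * σ₀ ^ ((4 - q) / 2) * I := by ring
end
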